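/- arXiv:1204.1308 — 4 statements merged into one kernel-verified Lean document; each statement's English description precedes it below -/
import Mathlib

section
/- Let n ≥ 1 and let P be a convex body in ℝⁿ contained in the positive octant [0,∞)ⁿ whose barycenter is the point (1,1,...,1). Then Vol(P) ≤ (n+1)ⁿ/n!, where Vol denotes Lebesgue measure. (The bound is attained by (n+1) times the unit simplex.) -/
/-!
With `a = n + 1` and `f x = a - ∑ i, x i`, the barycenter condition says `∫_P f = Vol P`.
Inside the octant, `f ≥ 0` exactly on the simplex `S = {x ≥ 0, ∑ i, x i ≤ a}`, so moving `P`
onto `S` can only increase the integral of `f`: `Vol P ≤ ∫_S f`. By Fubini, `∫_S f` is the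
volume of the `(n+1)`-dimensional simplex of size `a`, namely `a ^ (n+1) / (n+1)!`, which for
`a = n + 1` equals `(n+1)ⁿ / n!`.
-/

open MeasureTheory

theorem setIntegral_le_setIntegral_of_nonpos_of_nonneg {α : Type*} [MeasurableSpace α]
    {μ : Measure α} {f : α → ℝ} {s t : Set α} (hs : MeasurableSet s) (ht : MeasurableSet t)
    (hfs : IntegrableOn f s μ) (hft : IntegrableOn f t μ)
    (hst : ∀ x ∈ s \ t, f x ≤ 0) (hts : ∀ x ∈ t \ s, 0 ≤ f x) :
    ∫ x in s, f x ∂μ ≤ ∫ x in t, f x ∂μ := by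
  rw [← integral_inter_add_sdiff ht hfs, ← integral_inter_add_sdiff hs hft, Set.inter_comm]
  linarith [setIntegral_nonpos (μ := μ) (hs.diff ht) hst,
    setIntegral_nonneg (μ := μ) (ht.diff hs) hts]

theorem integral_sum_apply {α ι : Type*} [MeasurableSpace α] [Fintype ι] {μ : Measure α}
    {f : α → ι → ℝ} (hf : Integrable f μ) :
    ∫ x, ∑ i, f x i ∂μ = ∑ i, (∫ x, f x ∂μ) i := by
  rw [integral_finsetSum _ fun i _ => hf.eval i]
  exact Finset.sum_congr rfl fun i _ => (eval_integral hf.eval i).symm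

theorem integral_sub_pow_div_factorial (n : ℕ) (a : ℝ) :
    ∫ t in (0 : ℝ)..a, (a - t) ^ n / n.factorial = a ^ (n + 1) / (n + 1).factorial := by
  rw [intervalIntegral.integral_div, intervalIntegral.integral_comp_sub_left (fun t => t ^ n),
    sub_self, sub_zero, integral_pow, Nat.factorial_succ]
  push_cast
  field_simp
  ring

def solidSimplex (n : ℕ) (a : ℝ) : Set (Fin n → ℝ) := {x | (∀ i, 0 ≤ x i) ∧ ∑ i, x i ≤ a}

theorem isClosed_solidSimplex (n : ℕ) (a : ℝ) : IsClosed (solidSimplex n a) := by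
  simp only [solidSimplex, Set.ofPred_and, Set.ofPred_forall]
  exact (isClosed_iInter fun i => isClosed_le continuous_const (continuous_apply i)).inter
    (isClosed_le (by fun_prop) continuous_const)

theorem isCompact_solidSimplex (n : ℕ) (a : ℝ) : IsCompact (solidSimplex n a) := by
  refine (isCompact_Icc (a := 0) (b := fun _ => max a 0)).of_isClosed_subset
    (isClosed_solidSimplex n a) fun x ⟨hx0, hxa⟩ => ⟨hx0, fun i => ?_⟩
  exact le_max_of_le_left ((Finset.single_le_sum (fun j _ => hx0 j) (Finset.mem_univ i)).trans hxa)

theorem solidSimplex_succ (n : ℕ) (a : ℝ) :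
    solidSimplex (n + 1) a = MeasurableEquiv.piFinSuccAbove (fun _ => ℝ) 0 ⁻¹'
      {p | 0 ≤ p.1 ∧ p.2 ∈ solidSimplex n (a - p.1)} := by
  ext x
  simp only [solidSimplex, Set.mem_ofPred_eq, Set.mem_preimage,
    MeasurableEquiv.piFinSuccAbove_apply, Fin.forall_fin_succ,
    Fin.sum_univ_succ, le_sub_iff_add_le']
  tauto

theorem measurableSet_setOf_nonneg_and_mem_solidSimplex_sub (n : ℕ) (a : ℝ) :
    MeasurableSet {p : ℝ × (Fin n → ℝ) | 0 ≤ p.1 ∧ p.2 ∈ solidSimplex n (a - p.1)} := by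
  simp only [solidSimplex, Set.mem_ofPred_eq]
  measurability

theorem volume_solidSimplex_succ (n : ℕ) (a : ℝ) :
    volume (solidSimplex (n + 1) a) =
      (volume : Measure ℝ).prod volume {p | 0 ≤ p.1 ∧ p.2 ∈ solidSimplex n (a - p.1)} := by
  rw [solidSimplex_succ, (volume_preserving_piFinSuccAbove (fun _ => ℝ) 0).measure_preimage_equiv,
    Measure.volume_eq_prod]

theorem solidSimplex_eq_empty {n : ℕ} {a : ℝ} (ha : a < 0) : solidSimplex n a = ∅ :=
  Set.eq_empty_of_forall_notMem fun _ ⟨hx0, hxa⟩ =>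
    (Finset.sum_nonneg fun i _ => hx0 i).not_gt (hxa.trans_lt ha)

theorem volume_solidSimplex_succ_eq_lintegral_Icc (n : ℕ) (a : ℝ) :
    volume (solidSimplex (n + 1) a) = ∫⁻ t in Set.Icc 0 a, volume (solidSimplex n (a - t)) := by
  rw [volume_solidSimplex_succ,
    Measure.prod_apply (measurableSet_setOf_nonneg_and_mem_solidSimplex_sub n a),
    ← lintegral_indicator measurableSet_Icc]
  refine lintegral_congr fun t => ?_
  by_cases ht : t ∈ Set.Icc 0 a
  · rw [Set.indicator_of_mem ht]
    simp [Set.preimage, ht.1]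
  · rw [Set.indicator_of_notMem ht]
    rcases not_and_or.1 ht with ht | ht
    · simp [Set.preimage, ht]
    · simp [Set.preimage, solidSimplex_eq_empty (sub_neg.2 (not_le.1 ht))]

theorem volume_solidSimplex_succ_eq_lintegral (n : ℕ) (a : ℝ) :
    volume (solidSimplex (n + 1) a) = ∫⁻ x in solidSimplex n a, ENNReal.ofReal (a - ∑ i, x i) := by
  rw [volume_solidSimplex_succ,
    Measure.prod_apply_symm (measurableSet_setOf_nonneg_and_mem_solidSimplex_sub n a),
    ← lintegral_indicator (isClosed_solidSimplex n a).measurableSet]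
  refine lintegral_congr fun x => ?_
  by_cases hx : x ∈ solidSimplex n a
  · have slice : (fun t => (t, x)) ⁻¹' {p | 0 ≤ p.1 ∧ p.2 ∈ solidSimplex n (a - p.1)} =
        Set.Icc 0 (a - ∑ i, x i) := by
      ext t
      simp [solidSimplex, hx.1, le_sub_comm]
    rw [Set.indicator_of_mem hx, slice, Real.volume_Icc, sub_zero]
  · have slice : (fun t => (t, x)) ⁻¹' {p | 0 ≤ p.1 ∧ p.2 ∈ solidSimplex n (a - p.1)} = ∅ :=
      Set.eq_empty_of_forall_notMem fun t ⟨ht, hx0, hxa⟩ => hx ⟨hx0, by linarith⟩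
    rw [Set.indicator_of_notMem hx, slice, measure_empty]

theorem volume_solidSimplex (n : ℕ) {a : ℝ} (ha : 0 ≤ a) :
    volume (solidSimplex n a) = ENNReal.ofReal (a ^ n / n.factorial) := by
  induction n generalizing a with
  | zero => simp [solidSimplex, ha, volume_pi]
  | succ n ih =>
    have h_nonneg : ∀ᵐ t ∂volume.restrict (Set.Icc 0 a), 0 ≤ (a - t) ^ n / n.factorial := by
      filter_upwards [ae_restrict_mem measurableSet_Icc] with t ht
      have hat : 0 ≤ a - t := sub_nonneg.2 ht.2
      positivity
    rw [volume_solidSimplex_succ_eq_lintegral_Icc,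
      setLIntegral_congr_fun measurableSet_Icc fun t ht => ih (sub_nonneg.2 ht.2),
      ← ofReal_integral_eq_lintegral_ofReal (Continuous.integrableOn_Icc (by fun_prop)) h_nonneg,
      integral_Icc_eq_integral_Ioc, ← intervalIntegral.integral_of_le ha,
      integral_sub_pow_div_factorial]

theorem integral_sub_sum_solidSimplex (n : ℕ) {a : ℝ} (ha : 0 ≤ a) :
    ∫ x in solidSimplex n a, (a - ∑ i, x i) = a ^ (n + 1) / (n + 1).factorial := by
  have h_nonneg : ∀ᵐ x ∂volume.restrict (solidSimplex n a), 0 ≤ a - ∑ i, x i := by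
    filter_upwards [ae_restrict_mem (isClosed_solidSimplex n a).measurableSet] with x hx
    exact sub_nonneg.2 hx.2
  rw [integral_eq_lintegral_of_nonneg_ae h_nonneg (by fun_prop),
    ← volume_solidSimplex_succ_eq_lintegral, volume_solidSimplex (n + 1) ha,
    ENNReal.toReal_ofReal (by positivity)]

theorem setIntegral_sub_sum_of_integral_eq_smul {n : ℕ} {K : Set (Fin n → ℝ)} (hK : IsCompact K)
    (a : ℝ) {b : Fin n → ℝ} (hb : ∫ x in K, x = (volume K).toReal • b) :
    ∫ x in K, (a - ∑ i, x i) = (volume K).toReal * (a - ∑ i, b i) := by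
  rw [integral_sub (integrableOn_const (C := a) hK.measure_lt_top.ne)
      ((by fun_prop : Continuous fun x : Fin n → ℝ => ∑ i, x i).continuousOn.integrableOn_compact
        hK),
    setIntegral_const,
    integral_sum_apply (f := fun x => x) (continuous_id.continuousOn.integrableOn_compact hK), hb]
  simp [Measure.real, Finset.mul_sum, mul_sub]

theorem volume_le_of_barycenter_one_general (n : ℕ) (P : Set (Fin n → ℝ))
    (hcomp : IsCompact P)
    (hoct : ∀ x ∈ P, ∀ i, 0 ≤ x i)
    (hbar : ∫ x in P, x = (volume P).toReal • (fun _ => (1 : ℝ))) :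
    (volume P).toReal ≤ ((n : ℝ) + 1) ^ n / (n.factorial : ℝ) := by
  set a : ℝ := n + 1
  have h_int : ∀ K, IsCompact K → IntegrableOn (fun x : Fin n → ℝ => a - ∑ i, x i) K :=
    fun K hK => (by fun_prop : Continuous _).continuousOn.integrableOn_compact hK
  calc (volume P).toReal = ∫ x in P, (a - ∑ i, x i) := by
        rw [setIntegral_sub_sum_of_integral_eq_smul hcomp a hbar]
        simp [a]
    _ ≤ ∫ x in solidSimplex n a, (a - ∑ i, x i) :=
      setIntegral_le_setIntegral_of_nonpos_of_nonneg hcomp.isClosed.measurableSet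
        (isClosed_solidSimplex n a).measurableSet (h_int P hcomp)
        (h_int _ (isCompact_solidSimplex n a))
        (fun x hx => sub_nonpos.2 (not_le.1 fun h => hx.2 ⟨hoct x hx.1, h⟩).le)
        fun x hx => sub_nonneg.2 hx.1.2
    _ = a ^ (n + 1) / (n + 1).factorial := integral_sub_sum_solidSimplex n (by positivity)
    _ = a ^ n / n.factorial := by
      rw [Nat.factorial_succ, pow_succ]
      push_cast
      field_simp
      rfl

/-- A convex body `P` in `ℝⁿ` (`n ≥ 1`) contained in the positive
octant whose barycenter is `(1,…,1)` has volume at most `(n+1)ⁿ/n!`. -/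
theorem volume_le_of_barycenter_one (n : ℕ) (hn : 1 ≤ n) (P : Set (Fin n → ℝ))
    (hconv : Convex ℝ P) (hcomp : IsCompact P) (hint : (interior P).Nonempty)
    (hoct : ∀ x ∈ P, ∀ i, 0 ≤ x i)
    (hbar : ∫ x in P, x = (volume P).toReal • (fun _ => (1 : ℝ))) :
    (volume P).toReal ≤ ((n : ℝ) + 1) ^ n / (n.factorial : ℝ) :=
  volume_le_of_barycenter_one_general n P hcomp hoct hbar
end

section
/- Let n ≥ 1 and let P ⊆ ℝⁿ be a compact set with nonempty interior of the form P = {x ∈ ℝⁿ : ⟨l_F, x⟩ ≥ −a_F for all F in a finite index set}, where each l_F ∈ ℤⁿ is a primitive lattice vector and each a_F is a rational number with 0 < a_F ≤ 1, and suppose the barycenter of P is the origin. Then there exists an invertible affine map T : ℝⁿ → ℝⁿ such that T(P) is contained in the positive octant [0,∞)ⁿ, the barycenter of T(P) is (1,1,...,1), and Vol(T(P)) ≥ Vol(P). -/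
open MeasureTheory Matrix Module Submodule Set

/-! Since `P` is bounded and nonempty, its normals `l_F` span `ℝⁿ`, so some `n` of them form an
integer matrix `L` with `|det L| ≥ 1`. Take `T x = L x + (1, …, 1)`: each coordinate of `T x` is
`⟨l_F, x⟩ + 1 ≥ 1 - a_F ≥ 0`, affine maps send barycenters to barycenters, and `T` multiplies
volumes by `|det L| ≥ 1`. -/

section AffineImage

variable {E F : Type*} [NormedAddCommGroup E] [NormedSpace ℝ E] [FiniteDimensional ℝ E]
  [NormedAddCommGroup F] [NormedSpace ℝ F] (T : E ≃ᵃ[ℝ] E)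

theorem AffineEquiv.hasFDerivAt_linear (x : E) :
    HasFDerivAt T (T.linear.toContinuousLinearEquiv : E →L[ℝ] E) x := by
  have hT : ⇑T = fun y => T.linear y + T 0 := T.toAffineMap.decomp
  rw [hT]
  exact (T.linear.toContinuousLinearEquiv : E →L[ℝ] E).hasFDerivAt.add_const (T 0)

variable [MeasurableSpace E] (μ : Measure E) {s : Set E}

theorem setIntegral_affineEquiv (hint : IntegrableOn id s μ) (hfin : μ s ≠ ⊤) :
    ∫ x in s, T x ∂μ = T.linear (∫ x in s, x ∂μ) + μ.real s • T 0 := by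
  have hT : ⇑T = fun y => T.linear y + T 0 := T.toAffineMap.decomp
  have hlin : IntegrableOn (fun x => T.linear x) s μ :=
    (T.linear.toContinuousLinearEquiv : E →L[ℝ] E).integrable_comp hint
  conv_lhs => rw [hT]
  rw [integral_add hlin (integrableOn_const hfin), setIntegral_const]
  congr 1
  exact T.linear.toContinuousLinearEquiv.integral_comp_comm _

variable [BorelSpace E] [μ.IsAddHaarMeasure]

theorem addHaar_image_affineEquiv (hs : MeasurableSet s) :
    μ (T '' s) = ENNReal.ofReal |LinearMap.det (T.linear : E →ₗ[ℝ] E)| * μ s := by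
  rw [← lintegral_abs_det_fderiv_eq_addHaar_image μ hs
    (fun x _ => (T.hasFDerivAt_linear x).hasFDerivWithinAt) T.injective.injOn,
    setLIntegral_const]
  rfl

theorem setIntegral_image_affineEquiv (hs : MeasurableSet s) (g : E → F) :
    ∫ y in T '' s, g y ∂μ = |LinearMap.det (T.linear : E →ₗ[ℝ] E)| • ∫ x in s, g (T x) ∂μ := by
  rw [integral_image_eq_integral_abs_det_fderiv_smul μ hs
    (fun x _ => (T.hasFDerivAt_linear x).hasFDerivWithinAt) T.injective.injOn, integral_smul]
  rfl

theorem setIntegral_image_affineEquiv_of_setIntegral_eq_zero (hs : MeasurableSet s)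
    (hint : IntegrableOn id s μ) (hfin : μ s ≠ ⊤) (h₀ : ∫ x in s, x ∂μ = 0) :
    ∫ y in T '' s, y ∂μ = μ.real (T '' s) • T 0 := by
  rw [setIntegral_image_affineEquiv T μ hs, setIntegral_affineEquiv T μ hint hfin, h₀,
    map_zero, zero_add, smul_smul, measureReal_def, measureReal_def,
    addHaar_image_affineEquiv T μ hs, ENNReal.toReal_mul, ENNReal.toReal_ofReal (abs_nonneg _)]

end AffineImage

theorem Bornology.IsBounded.eq_zero_of_forall_add_smul_mem {E : Type*} [NormedAddCommGroup E]
    [NormedSpace ℝ E] {S : Set E} (hS : Bornology.IsBounded S) {x v : E}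
    (h : ∀ t : ℝ, x + t • v ∈ S) : v = 0 := by
  obtain ⟨C, hC⟩ := isBounded_iff_forall_norm_le.1 hS
  by_contra hv
  have hvpos : 0 < ‖v‖ := norm_pos_iff.2 hv
  set t := (C + ‖x‖ + 1) / ‖v‖
  have htv : ‖t • v‖ = C + ‖x‖ + 1 := by
    have hC₀ : 0 ≤ C := (norm_nonneg _).trans (hC _ (by simpa using h 0))
    rw [norm_smul, Real.norm_of_nonneg (by positivity), div_mul_cancel₀ _ hvpos.ne']
  have htriangle := norm_sub_le (x + t • v) x
  rw [add_sub_cancel_left] at htriangle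
  linarith [hC _ (h t)]

theorem Matrix.span_row_eq_top_of_injective {m n K : Type*} [Finite m] [Fintype n] [Field K]
    (M : Matrix m n K) (hM : Function.Injective M.mulVec) : span K (range M.row) = ⊤ := by
  apply eq_top_of_finrank_eq
  rw [← rank_eq_finrank_span_row, Matrix.rank, LinearMap.finrank_range_of_inj hM]

theorem exists_linearIndependent_comp_of_span_eq_top {K V ι m : Type*} [DivisionRing K]
    [AddCommGroup V] [Module K V] [Module.Finite K V] [Fintype m] {v : ι → V}
    (hv : span K (range v) = ⊤) (hm : Fintype.card m = finrank K V) :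
    ∃ f : m → ι, LinearIndependent K (v ∘ f) := by
  obtain ⟨g, hg, -, hgli⟩ := exists_fun_fin_finrank_span_eq K (range v)
  have hcard : Fintype.card m = finrank K (span K (range v)) := by rw [hv, finrank_top, hm]
  choose f hf using fun i => hg (Fintype.equivFinOfCardEq hcard i)
  refine ⟨f, ?_⟩
  have : v ∘ f = g ∘ Fintype.equivFinOfCardEq hcard := funext hf
  rw [this]
  exact hgli.comp _ (Fintype.equivFinOfCardEq hcard).injective

/-- A vector orthogonal to all normals would give a line inside the polyhedron. -/
theorem span_eq_top_of_isBounded_polyhedron {ι m : Type*} [Finite ι] [Fintype m]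
    {w : ι → m → ℝ} {b : ι → ℝ} (hbdd : Bornology.IsBounded {x | ∀ F, b F ≤ w F ⬝ᵥ x})
    (hne : {x | ∀ F, b F ≤ w F ⬝ᵥ x}.Nonempty) : span ℝ (range w) = ⊤ := by
  obtain ⟨x₀, hx₀⟩ := hne
  refine (of w).span_row_eq_top_of_injective <| (injective_iff_map_eq_zero (of w).mulVecLin).2
    fun v hv => hbdd.eq_zero_of_forall_add_smul_mem (x := x₀) fun t F => ?_
  have hwv : w F ⬝ᵥ v = 0 := congrFun hv F
  simpa [dotProduct_add, dotProduct_smul, hwv] using hx₀ F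

theorem Matrix.one_le_abs_det_map_intCast {m : Type*} [Fintype m] [DecidableEq m]
    (L : Matrix m m ℤ) (hL : LinearIndependent ℝ (L.map (Int.cast : ℤ → ℝ)).row) :
    1 ≤ |(L.map (Int.cast : ℤ → ℝ)).det| := by
  have hdet : L.det ≠ 0 := by
    have := ((isUnit_iff_isUnit_det _).1 (linearIndependent_rows_iff_isUnit.1 hL)).ne_zero
    rwa [← Int.cast_det, Int.cast_ne_zero] at this
  rw [← Int.cast_det, ← Int.cast_abs]
  exact_mod_cast Int.one_le_abs hdet

theorem exists_affine_normalization_general (n : ℕ)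
    (ι : Type) (s : Finset ι) (l : ι → Fin n → ℤ) (a : ι → ℚ)
    (ha : ∀ F ∈ s, 0 < a F ∧ a F ≤ 1)
    (P : Set (Fin n → ℝ))
    (hP : P = {x : Fin n → ℝ | ∀ F ∈ s, -(a F : ℝ) ≤ ∑ i, (l F i : ℝ) * x i})
    (hcomp : IsCompact P) (hint : (interior P).Nonempty)
    (hbar : ∫ x in P, x = 0) :
    ∃ T : (Fin n → ℝ) ≃ᵃ[ℝ] (Fin n → ℝ),
      (∀ y ∈ ⇑T '' P, ∀ i, 0 ≤ y i) ∧
      (∫ y in ⇑T '' P, y = (volume (⇑T '' P)).toReal • (fun _ => (1 : ℝ))) ∧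
      volume P ≤ volume (⇑T '' P) := by
  have hP' : P = {x | ∀ F : s, -(a F : ℝ) ≤ (fun i => (l F i : ℝ)) ⬝ᵥ x} := by
    simp [hP, dotProduct]
  have hspan := span_eq_top_of_isBounded_polyhedron (hP' ▸ hcomp.isBounded)
    (hP' ▸ hint.mono interior_subset)
  obtain ⟨f, hf⟩ := exists_linearIndependent_comp_of_span_eq_top hspan (m := Fin n) (by simp)
  set L : Matrix (Fin n) (Fin n) ℝ := (of fun i j => l (f i) j).map (Int.cast : ℤ → ℝ)
  have hdet : 1 ≤ |L.det| := Matrix.one_le_abs_det_map_intCast _ hf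
  have hdet₀ : LinearMap.det (toLin' L) ≠ 0 := by
    rw [LinearMap.det_toLin']
    exact abs_pos.1 (one_pos.trans_le hdet)
  let T := ((toLin' L).equivOfDetNeZero hdet₀).toAffineEquiv.trans
    (AffineEquiv.constVAdd ℝ (Fin n → ℝ) 1)
  have hTlin : LinearMap.det (T.linear : (Fin n → ℝ) →ₗ[ℝ] (Fin n → ℝ)) = L.det :=
    LinearMap.det_toLin' L
  have hPmeas := hcomp.isClosed.measurableSet
  refine ⟨T, ?_, ?_, ?_⟩
  · rintro _ ⟨x, hx, rfl⟩ i
    have hxi := (hP ▸ hx) _ (f i).2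
    have hai : (a (f i) : ℝ) ≤ 1 := by exact_mod_cast (ha _ (f i).2).2
    change 0 ≤ 1 + ∑ j, (l (f i) j : ℝ) * x j
    linarith
  · rw [setIntegral_image_affineEquiv_of_setIntegral_eq_zero T volume hPmeas
      (continuousOn_id.integrableOn_compact hcomp) hcomp.measure_lt_top.ne hbar]
    congr 1
    simp [T, Pi.one_def]
  · rw [addHaar_image_affineEquiv T volume hPmeas, hTlin]
    exact le_mul_of_one_le_left zero_le (ENNReal.one_le_ofReal.2 hdet)

/-- If `P ⊆ ℝⁿ` (`n ≥ 1`) is a compact set with nonempty interior cut out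
by inequalities `⟨l_F, x⟩ ≥ -a_F` with primitive integer normals `l_F` and rational
`0 < a_F ≤ 1`, and the barycenter of `P` is the origin, then there is an invertible
affine map `T` of `ℝⁿ` such that `T(P)` lies in the positive octant, has barycenter
`(1,…,1)`, and `Vol(T(P)) ≥ Vol(P)`. -/
theorem exists_affine_normalization (n : ℕ) (hn : 1 ≤ n)
    (ι : Type) (s : Finset ι) (l : ι → Fin n → ℤ) (a : ι → ℚ)
    (hprim : ∀ F ∈ s, Finset.univ.gcd (fun i => (l F i).natAbs) = 1)
    (ha : ∀ F ∈ s, 0 < a F ∧ a F ≤ 1)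
    (P : Set (Fin n → ℝ))
    (hP : P = {x : Fin n → ℝ | ∀ F ∈ s, -(a F : ℝ) ≤ ∑ i, (l F i : ℝ) * x i})
    (hcomp : IsCompact P) (hint : (interior P).Nonempty)
    (hbar : ∫ x in P, x = 0) :
    ∃ T : (Fin n → ℝ) ≃ᵃ[ℝ] (Fin n → ℝ),
      (∀ y ∈ ⇑T '' P, ∀ i, 0 ≤ y i) ∧
      (∫ y in ⇑T '' P, y = (volume (⇑T '' P)).toReal • (fun _ => (1 : ℝ))) ∧
      volume P ≤ volume (⇑T '' P) :=
  exists_affine_normalization_general n ι s l a ha P hP hcomp hint hbar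
end

section
/- Let n ≥ 1 and let P ⊆ ℝⁿ be a compact set of the form P = {x ∈ ℝⁿ : ⟨l_F, x⟩ ≥ −a_F for all F in a finite index set}, where each l_F is a nonzero vector in ℤⁿ and each a_F is a real number with 0 < a_F ≤ 1. Then the only point of ℤⁿ lying in the interior of P is the origin; in particular 0 is the unique interior lattice point of P. -/
/-!
Every facet inequality of `P` is given by a nonzero, hence open, linear form, so the interior of
`P` is cut out by the strict inequalities `⟨l_F, x⟩ > -a_F`. At a lattice point `z` the value
`⟨l_F, z⟩` is an integer `> -a_F ≥ -1`, hence `≥ 0`; then the whole ray `ℝ≥0 • z` lies in `P`,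
and boundedness of `P` forces `z = 0`.
-/

open Set Bornology

theorem interior_setOf_forall_le {X ι α : Type*} [TopologicalSpace X] [TopologicalSpace α]
    [LinearOrder α] [OrderTopology α] [DenselyOrdered α] [NoMinOrder α]
    {s : Finset ι} {c : ι → α} {f : ι → X → α}
    (hcont : ∀ i ∈ s, Continuous (f i)) (hopen : ∀ i ∈ s, IsOpenMap (f i)) :
    interior {x | ∀ i ∈ s, c i ≤ f i x} = {x | ∀ i ∈ s, c i < f i x} := by
  have hinter : {x | ∀ i ∈ s, c i ≤ f i x} = ⋂ i ∈ s, f i ⁻¹' Ici (c i) := by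
    ext; simp
  rw [hinter, Finset.interior_iInter]
  ext x
  simp only [mem_iInter]
  refine forall₂_congr fun i hi => ?_
  rw [← (hopen i hi).preimage_interior_eq_interior_preimage (hcont i hi), interior_Ici]
  rfl

theorem isOpenMap_dotProduct {𝕜 m : Type*} [NontriviallyNormedField 𝕜] [CompleteSpace 𝕜]
    [Fintype m] {v : m → 𝕜} (hv : v ≠ 0) : IsOpenMap (v ⬝ᵥ ·) := by
  classical
  obtain ⟨i, hi⟩ := Function.ne_iff.1 hv
  have hne : dotProductBilin 𝕜 𝕜 v ≠ 0 := fun h => hi <| by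
    simpa [dotProduct_single] using LinearMap.congr_fun h (Pi.single i 1)
  exact (dotProductBilin 𝕜 𝕜 v).isOpenMap_of_finiteDimensional (LinearMap.surjective_of_ne_zero hne)

theorem intCast_dotProduct_nonneg_of_neg_one_lt {m : Type*} [Fintype m] {v z : m → ℤ}
    (h : -1 < (fun i => (v i : ℝ)) ⬝ᵥ fun i => (z i : ℝ)) :
    0 ≤ (fun i => (v i : ℝ)) ⬝ᵥ fun i => (z i : ℝ) := by
  have hcast : (fun i => (v i : ℝ)) ⬝ᵥ (fun i => (z i : ℝ)) = ((v ⬝ᵥ z : ℤ) : ℝ) :=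
    ((Int.castRingHom ℝ).map_dotProduct v z).symm
  rw [hcast] at h ⊢
  have h' : (-1 : ℤ) < v ⬝ᵥ z := by exact_mod_cast h
  exact_mod_cast (by omega : 0 ≤ v ⬝ᵥ z)

theorem eq_zero_of_forall_smul_mem_of_isBounded {E : Type*} [NormedAddCommGroup E]
    [NormedSpace ℝ E] {S : Set E} (hS : IsBounded S) {z : E} (hz : ∀ t : ℝ, 0 ≤ t → t • z ∈ S) :
    z = 0 := by
  obtain ⟨R, hR⟩ := isBounded_iff_forall_norm_le.1 hS
  by_contra hz0
  have hpos : 0 < ‖z‖ := norm_pos_iff.2 hz0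
  have hle := hR _ (hz ((|R| + 1) / ‖z‖) (by positivity))
  rw [norm_smul, Real.norm_of_nonneg (by positivity), div_mul_cancel₀ _ hpos.ne'] at hle
  linarith [le_abs_self R]

theorem unique_interior_lattice_point_general (n : ℕ)
    (ι : Type) (s : Finset ι) (l : ι → Fin n → ℤ) (a : ι → ℝ)
    (hl : ∀ F ∈ s, l F ≠ 0)
    (ha : ∀ F ∈ s, 0 < a F ∧ a F ≤ 1)
    (P : Set (Fin n → ℝ))
    (hP : P = {x : Fin n → ℝ | ∀ F ∈ s, -(a F) ≤ ∑ i, (l F i : ℝ) * x i})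
    (hcomp : IsCompact P) :
    (0 : Fin n → ℝ) ∈ interior P ∧
      ∀ z : Fin n → ℤ, (fun i => (z i : ℝ)) ∈ interior P → z = 0 := by
  have hcast_ne : ∀ F ∈ s, (fun i => (l F i : ℝ)) ≠ 0 := fun F hF h =>
    hl F hF <| funext fun i => by simpa using congr_fun h i
  have hint : interior P = {x | ∀ F ∈ s, -(a F) < (fun i => (l F i : ℝ)) ⬝ᵥ x} := by
    rw [hP]
    exact interior_setOf_forall_le (fun F _ => continuous_const.dotProduct continuous_id)
      fun F hF => isOpenMap_dotProduct (hcast_ne F hF)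
  rw [hint]
  refine ⟨fun F hF => by simpa using (ha F hF).1, fun z hz => ?_⟩
  have hnonneg : ∀ F ∈ s, 0 ≤ (fun i => (l F i : ℝ)) ⬝ᵥ fun i => (z i : ℝ) := fun F hF =>
    intCast_dotProduct_nonneg_of_neg_one_lt (by linarith [hz F hF, (ha F hF).2])
  have hray : ∀ t : ℝ, 0 ≤ t → t • (fun i => (z i : ℝ)) ∈ P := fun t ht => by
    rw [hP]
    intro F hF
    change -(a F) ≤ (fun i => (l F i : ℝ)) ⬝ᵥ (t • fun i => (z i : ℝ))
    rw [dotProduct_smul, smul_eq_mul]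
    linarith [mul_nonneg ht (hnonneg F hF), (ha F hF).1]
  have := eq_zero_of_forall_smul_mem_of_isBounded hcomp.isBounded hray
  exact funext fun i => by simpa using congr_fun this i

/-- If `P ⊆ ℝⁿ` (`n ≥ 1`) is a compact set of the form
`P = {x : ⟨l_F, x⟩ ≥ -a_F, F ∈ s}` with nonzero integer vectors `l_F` and real
constants `0 < a_F ≤ 1`, then the origin is the unique lattice point in the
interior of `P`. -/
theorem unique_interior_lattice_point (n : ℕ) (hn : 1 ≤ n)
    (ι : Type) (s : Finset ι) (l : ι → Fin n → ℤ) (a : ι → ℝ)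
    (hl : ∀ F ∈ s, l F ≠ 0)
    (ha : ∀ F ∈ s, 0 < a F ∧ a F ≤ 1)
    (P : Set (Fin n → ℝ))
    (hP : P = {x : Fin n → ℝ | ∀ F ∈ s, -(a F) ≤ ∑ i, (l F i : ℝ) * x i})
    (hcomp : IsCompact P) :
    (0 : Fin n → ℝ) ∈ interior P ∧
      ∀ z : Fin n → ℤ, (fun i => (z i : ℝ)) ∈ interior P → z = 0 :=
  unique_interior_lattice_point_general n ι s l a hl ha P hP hcomp
end

section
/- (Prekopa's theorem.) Let I ⊆ ℝ be an open interval and let φ : I × ℝⁿ → ℝ be a convex function such that for every t ∈ I the integral ∫_{ℝⁿ} e^{−φ(t,x)} dx is finite and positive. Then the function t ↦ −log ∫_{ℝⁿ} e^{−φ(t,x)} dx is convex on I. -/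
/-!
Prékopa's theorem is the Prékopa–Leindler inequality applied to the sections `e^{-φ(t₀, ·)}`,
`e^{-φ(t₁, ·)}` and `e^{-φ(a t₀ + b t₁, ·)}`, which satisfy its pointwise hypothesis by the joint
convexity of `φ`: it gives `F(a t₀ + b t₁) ≥ F(t₀)^a F(t₁)^b` for `F(t) = ∫ e^{-φ(t, x)} dx`.

On `ℝ`, the superlevel sets satisfy `a {f > t} + b {g > t} ⊆ {h > t}`, so the one-dimensional
Brunn–Minkowski inequality `|A + B| ≥ |A| + |B|` and the layer-cake formula give
`∫ h ≥ a ∫ f + b ∫ g` once `sup f = sup g = 1`; rescaling and weighted AM–GM turn this into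
`∫ h ≥ (∫ f)^a (∫ g)^b` for bounded `f, g`, and monotone convergence removes boundedness.
The inequality passes from `μ` and `ν` to `μ.prod ν` by applying it first to the sections and then
to their integrals, which gives it on `ℝⁿ` by induction on `n`.
-/

open MeasureTheory Set
open scoped ENNReal Pointwise

namespace ENNReal

theorem rpow_mul_rpow_le_add {a b : ℝ} (ha : 0 < a) (hb : 0 < b) (hab : a + b = 1)
    (x y : ℝ≥0∞) : x ^ a * y ^ b ≤ ENNReal.ofReal a * x + ENNReal.ofReal b * y := by
  have hconj : a⁻¹.HolderConjugate b⁻¹ :=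
    Real.holderConjugate_iff.2 ⟨(one_lt_inv₀ ha).2 (by linarith), by simpa using hab⟩
  have hpow : ∀ {c : ℝ} (z : ℝ≥0∞), 0 < c →
      (z ^ c) ^ c⁻¹ / ENNReal.ofReal c⁻¹ = ENNReal.ofReal c * z := fun z hc => by
    rw [← ENNReal.rpow_mul, mul_inv_cancel₀ hc.ne', ENNReal.rpow_one,
      ENNReal.ofReal_inv_of_pos hc, div_eq_mul_inv, inv_inv, mul_comm]
  simpa only [hpow _ ha, hpow _ hb] using ENNReal.young_inequality (x ^ a) (y ^ b) hconj

theorem lt_rpow_mul_rpow {a b : ℝ} (ha : 0 < a) (hb : 0 < b) (hab : a + b = 1)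
    {t x y : ℝ≥0∞} (hx : t < x) (hy : t < y) : t < x ^ a * y ^ b :=
  calc t = t ^ a * t ^ b := by
        rw [← ENNReal.rpow_add_of_nonneg _ _ ha.le hb.le, hab, ENNReal.rpow_one]
    _ < x ^ a * y ^ b := ENNReal.mul_lt_mul (ENNReal.rpow_lt_rpow hx ha) (ENNReal.rpow_lt_rpow hy hb)

theorem iSup_rpow_mul_iSup_rpow_le {a b : ℝ} (ha : 0 < a) (hb : 0 < b) {u v : ℕ → ℝ≥0∞}
    (hu : Monotone u) (hv : Monotone v) {c : ℝ≥0∞} (h : ∀ n, u n ^ a * v n ^ b ≤ c) :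
    (⨆ n, u n) ^ a * (⨆ n, v n) ^ b ≤ c := by
  have iSup_rpow : ∀ {p : ℝ} (hp : 0 < p) (w : ℕ → ℝ≥0∞), (⨆ n, w n) ^ p = ⨆ n, w n ^ p :=
    fun hp w => (ENNReal.orderIsoRpow _ hp).map_iSup w
  simp only [iSup_rpow ha, iSup_rpow hb, ENNReal.iSup_mul, ENNReal.mul_iSup]
  exact iSup₂_le fun m n => (mul_le_mul' (ENNReal.rpow_le_rpow (hu (le_max_right m n)) ha.le)
    (ENNReal.rpow_le_rpow (hv (le_max_left m n)) hb.le)).trans (h _)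

end ENNReal

section Lintegral

variable {α : Type*} [MeasurableSpace α] {μ : Measure α}

theorem lintegral_eq_iSup_lintegral_min_natCast {u : α → ℝ≥0∞} (hu : Measurable u) :
    ∫⁻ x, u x ∂μ = ⨆ n : ℕ, ∫⁻ x, min (u x) n ∂μ := by
  rw [← lintegral_iSup (fun n => hu.min measurable_const)
    fun m n hmn x => min_le_min le_rfl (Nat.cast_le.2 hmn)]
  congr with x
  rw [← inf_iSup_eq, ENNReal.iSup_natCast, min_top_right]

theorem lintegral_eq_lintegral_Ioi_measure_lt {u : α → ℝ≥0∞} (hu : Measurable u)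
    (hu_top : ∀ x, u x ≠ ∞) :
    ∫⁻ x, u x ∂μ = ∫⁻ t in Ioi 0, μ {x | ENNReal.ofReal t < u x} :=
  calc ∫⁻ x, u x ∂μ = ∫⁻ x, ENNReal.ofReal (u x).toReal ∂μ := by
        simp only [ENNReal.ofReal_toReal (hu_top _)]
    _ = ∫⁻ t in Ioi 0, μ {x | t < (u x).toReal} :=
        lintegral_eq_lintegral_meas_lt μ (.of_forall fun _ => ENNReal.toReal_nonneg)
          hu.ennreal_toReal.aemeasurable
    _ = ∫⁻ t in Ioi 0, μ {x | ENNReal.ofReal t < u x} := by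
        refine setLIntegral_congr_fun measurableSet_Ioi fun t ht => ?_
        simp only [ENNReal.ofReal_lt_iff_lt_toReal (le_of_lt ht) (hu_top _)]

theorem AEMeasurable.exists_measurable_ge_lintegral_eq {h : α → ℝ≥0∞} (hh : AEMeasurable h μ) :
    ∃ h' : α → ℝ≥0∞, Measurable h' ∧ h ≤ h' ∧ ∫⁻ x, h' x ∂μ = ∫⁻ x, h x ∂μ := by
  classical
  set N := toMeasurable μ {x | h x ≠ hh.mk h x}
  have hN : μ N = 0 := by rw [measure_toMeasurable]; exact hh.ae_eq_mk
  refine ⟨N.piecewise (fun _ => ∞) (hh.mk h),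
    Measurable.piecewise (measurableSet_toMeasurable _ _) measurable_const hh.measurable_mk,
    fun x => ?_, ?_⟩
  · by_cases hx : x ∈ N
    · simp [hx]
    · have : h x = hh.mk h x := not_not.1 fun hne => hx (subset_toMeasurable _ _ hne)
      simp [hx, this]
  · refine lintegral_congr_ae ?_
    filter_upwards [measure_eq_zero_iff_ae_notMem.1 hN, hh.ae_eq_mk] with x hx hmk
    simp [hx, hmk]

end Lintegral

namespace Real

theorem volume_add_volume_le_volume_add_of_isCompact {K L : Set ℝ} (hK : IsCompact K)
    (hL : IsCompact L) (hKne : K.Nonempty) (hLne : L.Nonempty) :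
    volume K + volume L ≤ volume (K + L) := by
  obtain ⟨a, haK, ha⟩ := hK.exists_isGreatest hKne
  obtain ⟨b, hbL, hb⟩ := hL.exists_isLeast hLne
  -- the translates `a + L` and `b + K` lie in `K + L` and overlap only at `a + b`
  have hinter : (a +ᵥ L) ∩ (b +ᵥ K) ⊆ {a + b} := by
    rintro _ ⟨⟨y, hy, rfl⟩, ⟨x, hx, hxy⟩⟩
    have hxa : x ≤ a := ha hx
    have hby : b ≤ y := hb hy
    simp only [vadd_eq_add] at hxy ⊢
    exact mem_singleton_iff.2 (by linarith)
  calc volume K + volume L = volume (a +ᵥ L) + volume (b +ᵥ K) := by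
        rw [measure_vadd, measure_vadd, add_comm]
    _ = volume ((a +ᵥ L) ∪ (b +ᵥ K)) := by
        rw [← measure_union_add_inter' (hL.vadd a).measurableSet,
          measure_mono_null hinter (measure_singleton _), add_zero]
    _ ≤ volume (K + L) := by
        refine measure_mono (union_subset (vadd_set_subset_add haK) ?_)
        rw [add_comm]
        exact vadd_set_subset_add hbL

theorem volume_add_volume_le_volume_add {A B : Set ℝ} (hA : MeasurableSet A)
    (hB : MeasurableSet B) (hAne : A.Nonempty) (hBne : B.Nonempty) :
    volume A + volume B ≤ volume (A + B) := by
  obtain ⟨a, ha⟩ := hAne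
  obtain ⟨b, hb⟩ := hBne
  rw [hA.measure_eq_iSup_isCompact, hB.measure_eq_iSup_isCompact]
  simp only [iSup_and']
  refine ENNReal.biSup_add_biSup_le' ⟨∅, empty_subset _, isCompact_empty⟩
    ⟨∅, empty_subset _, isCompact_empty⟩ fun K ⟨hKA, hK⟩ L ⟨hLB, hL⟩ => ?_
  calc volume K + volume L ≤ volume (insert a K) + volume (insert b L) :=
        add_le_add (measure_mono (subset_insert _ _)) (measure_mono (subset_insert _ _))
    _ ≤ volume (insert a K + insert b L) :=
        volume_add_volume_le_volume_add_of_isCompact (hK.insert a) (hL.insert b)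
          (insert_nonempty _ _) (insert_nonempty _ _)
    _ ≤ volume (A + B) :=
        measure_mono (add_subset_add (insert_subset ha hKA) (insert_subset hb hLB))

end Real

def HasPrekopaLeindler {E : Type*} [AddCommMonoid E] [Module ℝ E] [MeasurableSpace E]
    (μ : Measure E) : Prop :=
  ∀ ⦃a b : ℝ⦄, 0 < a → 0 < b → a + b = 1 → ∀ ⦃f g h : E → ℝ≥0∞⦄,
    Measurable f → Measurable g → Measurable h → (∀ x y, f x ^ a * g y ^ b ≤ h (a • x + b • y)) →
      (∫⁻ x, f x ∂μ) ^ a * (∫⁻ y, g y ∂μ) ^ b ≤ ∫⁻ z, h z ∂μ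

namespace Real

variable {a b : ℝ} {f g h : ℝ → ℝ≥0∞}

theorem volume_superlevel_add_le (ha : 0 < a) (hb : 0 < b) (hab : a + b = 1)
    (hf : Measurable f) (hg : Measurable g) (hyp : ∀ x y, f x ^ a * g y ^ b ≤ h (a • x + b • y))
    {t : ℝ≥0∞} (hft : ∃ x, t < f x) (hgt : ∃ y, t < g y) :
    ENNReal.ofReal a * volume {x | t < f x} + ENNReal.ofReal b * volume {y | t < g y} ≤
      volume {z | t < h z} := by
  have hsub : a • {x | t < f x} + b • {y | t < g y} ⊆ {z | t < h z} := by
    rintro _ ⟨_, ⟨x, hx, rfl⟩, _, ⟨y, hy, rfl⟩, rfl⟩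
    exact (ENNReal.lt_rpow_mul_rpow ha hb hab hx hy).trans_le (hyp x y)
  calc ENNReal.ofReal a * volume {x | t < f x} + ENNReal.ofReal b * volume {y | t < g y}
      = volume (a • {x | t < f x}) + volume (b • {y | t < g y}) := by
        simp [Measure.addHaar_smul, abs_of_pos ha, abs_of_pos hb]
    _ ≤ volume (a • {x | t < f x} + b • {y | t < g y}) :=
        volume_add_volume_le_volume_add ((hf measurableSet_Ioi).const_smul₀ a)
          ((hg measurableSet_Ioi).const_smul₀ b) (Nonempty.smul_set hft) (Nonempty.smul_set hgt)
    _ ≤ volume {z | t < h z} := measure_mono hsub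

theorem add_lintegral_le_of_iSup_eq_one (ha : 0 < a) (hb : 0 < b) (hab : a + b = 1)
    (hf : Measurable f) (hg : Measurable g) (hh : Measurable h) (hf1 : ⨆ x, f x = 1)
    (hg1 : ⨆ y, g y = 1) (hyp : ∀ x y, f x ^ a * g y ^ b ≤ h (a • x + b • y)) :
    ENNReal.ofReal a * (∫⁻ x, f x) + ENNReal.ofReal b * ∫⁻ y, g y ≤ ∫⁻ z, h z := by
  have hf_le : ∀ x, f x ≤ 1 := fun x => hf1 ▸ le_iSup f x
  have hg_le : ∀ y, g y ≤ 1 := fun y => hg1 ▸ le_iSup g y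
  have hlevel : ∀ t ∈ Ioi (0 : ℝ), ENNReal.ofReal a * volume {x | ENNReal.ofReal t < f x} +
      ENNReal.ofReal b * volume {y | ENNReal.ofReal t < g y} ≤
        volume {z | ENNReal.ofReal t < min (h z) 1} := by
    intro t _
    rcases lt_or_ge t 1 with ht1 | ht1
    · have ht1' : ENNReal.ofReal t < 1 := ENNReal.ofReal_lt_one.2 ht1
      simp only [lt_min_iff, ht1', and_true]
      exact volume_superlevel_add_le ha hb hab hf hg hyp (lt_iSup_iff.1 (hf1 ▸ ht1'))
        (lt_iSup_iff.1 (hg1 ▸ ht1'))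
    · have hempty : ∀ u : ℝ → ℝ≥0∞, (∀ x, u x ≤ 1) → {x | ENNReal.ofReal t < u x} = ∅ :=
        fun u hu => eq_empty_of_forall_notMem fun x hx =>
          (hx.trans_le (hu x)).not_ge (ENNReal.one_le_ofReal.2 ht1)
      simp [hempty f hf_le, hempty g hg_le]
  have hne_top : ∀ {u : ℝ → ℝ≥0∞}, (∀ x, u x ≤ 1) → ∀ x, u x ≠ ∞ :=
    fun hu x => ne_top_of_le_ne_top ENNReal.one_ne_top (hu x)
  calc ENNReal.ofReal a * (∫⁻ x, f x) + ENNReal.ofReal b * ∫⁻ y, g y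
      = ENNReal.ofReal a * (∫⁻ t in Ioi 0, volume {x | ENNReal.ofReal t < f x}) +
          ENNReal.ofReal b * ∫⁻ t in Ioi 0, volume {y | ENNReal.ofReal t < g y} := by
        rw [lintegral_eq_lintegral_Ioi_measure_lt hf (hne_top hf_le),
          lintegral_eq_lintegral_Ioi_measure_lt hg (hne_top hg_le)]
    _ ≤ ∫⁻ t in Ioi 0, (ENNReal.ofReal a * volume {x | ENNReal.ofReal t < f x} +
          ENNReal.ofReal b * volume {y | ENNReal.ofReal t < g y}) :=
        (add_le_add (lintegral_const_mul_le _ _) (lintegral_const_mul_le _ _)).trans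
          (le_lintegral_add _ _)
    _ ≤ ∫⁻ t in Ioi 0, volume {z | ENNReal.ofReal t < min (h z) 1} :=
        setLIntegral_mono' measurableSet_Ioi hlevel
    _ = ∫⁻ z, min (h z) 1 :=
        (lintegral_eq_lintegral_Ioi_measure_lt (hh.min measurable_const)
          (hne_top fun _ => min_le_right _ _)).symm
    _ ≤ ∫⁻ z, h z := lintegral_mono fun z => min_le_left _ _

theorem lintegral_rpow_mul_lintegral_rpow_le_of_iSup_ne_top (ha : 0 < a) (hb : 0 < b)
    (hab : a + b = 1) (hf : Measurable f) (hg : Measurable g) (hh : Measurable h)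
    (hf_top : ⨆ x, f x ≠ ∞) (hg_top : ⨆ y, g y ≠ ∞)
    (hyp : ∀ x y, f x ^ a * g y ^ b ≤ h (a • x + b • y)) :
    (∫⁻ x, f x) ^ a * (∫⁻ y, g y) ^ b ≤ ∫⁻ z, h z := by
  set A := ⨆ x, f x
  set B := ⨆ y, g y
  rcases eq_or_ne A 0 with hA | hA
  · simp [ENNReal.iSup_eq_zero.1 hA, ENNReal.zero_rpow_of_pos ha]
  rcases eq_or_ne B 0 with hB | hB
  · simp [ENNReal.iSup_eq_zero.1 hB, ENNReal.zero_rpow_of_pos hb]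
  set c := A⁻¹ ^ a * B⁻¹ ^ b
  have hc0 : c ≠ 0 := mul_ne_zero (by simp [ENNReal.rpow_eq_zero_iff, hf_top, ha.not_gt])
    (by simp [ENNReal.rpow_eq_zero_iff, hg_top, hb.not_gt])
  have hc_top : c ≠ ∞ := ENNReal.mul_ne_top (ENNReal.rpow_ne_top_of_nonneg ha.le (by simpa))
    (ENNReal.rpow_ne_top_of_nonneg hb.le (by simpa))
  have hscale : ∀ u v : ℝ≥0∞, (A⁻¹ * u) ^ a * (B⁻¹ * v) ^ b = c * (u ^ a * v ^ b) := fun u v => by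
    rw [ENNReal.mul_rpow_of_nonneg _ _ ha.le, ENNReal.mul_rpow_of_nonneg _ _ hb.le]
    ring
  have hnorm := add_lintegral_le_of_iSup_eq_one ha hb hab (hf.const_mul A⁻¹) (hg.const_mul B⁻¹)
    (hh.const_mul c) (by rw [← ENNReal.mul_iSup, ENNReal.inv_mul_cancel hA hf_top])
    (by rw [← ENNReal.mul_iSup, ENNReal.inv_mul_cancel hB hg_top])
    fun x y => by rw [hscale]; exact mul_le_mul_right (hyp x y) c
  rw [lintegral_const_mul _ hf, lintegral_const_mul _ hg, lintegral_const_mul _ hh] at hnorm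
  rw [← ENNReal.mul_le_mul_iff_right hc0 hc_top, ← hscale]
  exact (ENNReal.rpow_mul_rpow_le_add ha hb hab _ _).trans hnorm

theorem hasPrekopaLeindler_volume : HasPrekopaLeindler (volume : Measure ℝ) := by
  intro a b ha hb hab f g h hf hg hh hyp
  have hmono : ∀ u : ℝ → ℝ≥0∞, Monotone fun n : ℕ => ∫⁻ x, min (u x) n :=
    fun _ m n hmn => lintegral_mono fun x => min_le_min le_rfl (Nat.cast_le.2 hmn)
  have hbdd : ∀ (u : ℝ → ℝ≥0∞) (n : ℕ), ⨆ x, min (u x) n ≠ ∞ :=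
    fun u n => ne_top_of_le_ne_top (ENNReal.natCast_ne_top n) (iSup_le fun _ => min_le_right _ _)
  rw [lintegral_eq_iSup_lintegral_min_natCast hf, lintegral_eq_iSup_lintegral_min_natCast hg]
  refine ENNReal.iSup_rpow_mul_iSup_rpow_le ha hb (hmono f) (hmono g) fun n =>
    lintegral_rpow_mul_lintegral_rpow_le_of_iSup_ne_top ha hb hab (hf.min measurable_const)
      (hg.min measurable_const) hh (hbdd f n) (hbdd g n) fun x y => ?_
  exact (mul_le_mul' (ENNReal.rpow_le_rpow (min_le_left _ _) ha.le)
    (ENNReal.rpow_le_rpow (min_le_left _ _) hb.le)).trans (hyp x y)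

end Real

namespace HasPrekopaLeindler

variable {E F : Type*} [AddCommMonoid E] [Module ℝ E] [MeasurableSpace E]
  [AddCommMonoid F] [Module ℝ F] [MeasurableSpace F]

theorem dirac_zero : HasPrekopaLeindler (Measure.dirac (0 : E)) := by
  intro a b _ _ _ f g h hf hg hh hyp
  simpa [lintegral_dirac' _ hf, lintegral_dirac' _ hg, lintegral_dirac' _ hh] using hyp 0 0

theorem prod {μ : Measure E} {ν : Measure F} [SFinite ν] (hμ : HasPrekopaLeindler μ)
    (hν : HasPrekopaLeindler ν) : HasPrekopaLeindler (μ.prod ν) := by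
  intro a b ha hb hab f g h hf hg hh hyp
  rw [lintegral_prod _ hf.aemeasurable, lintegral_prod _ hg.aemeasurable,
    lintegral_prod _ hh.aemeasurable]
  exact hμ ha hb hab hf.lintegral_prod_right' hg.lintegral_prod_right' hh.lintegral_prod_right'
    fun s t => hν ha hb hab (hf.comp measurable_prodMk_left) (hg.comp measurable_prodMk_left)
      (hh.comp measurable_prodMk_left) fun x y => hyp (s, x) (t, y)

theorem of_measurePreserving {μ : Measure E} {ν : Measure F} (hμ : HasPrekopaLeindler μ)
    (e : E →ₗ[ℝ] F) (he : MeasurePreserving e μ ν) : HasPrekopaLeindler ν := by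
  intro a b ha hb hab f g h hf hg hh hyp
  rw [← he.lintegral_comp hf, ← he.lintegral_comp hg, ← he.lintegral_comp hh]
  exact hμ ha hb hab (hf.comp he.measurable) (hg.comp he.measurable) (hh.comp he.measurable)
    fun x y => by simpa using hyp (e x) (e y)

theorem lintegral_rpow_mul_lintegral_rpow_le {μ : Measure E} (hμ : HasPrekopaLeindler μ)
    {a b : ℝ} (ha : 0 < a) (hb : 0 < b) (hab : a + b = 1) {f g h : E → ℝ≥0∞}
    (hh : AEMeasurable h μ) (hyp : ∀ x y, f x ^ a * g y ^ b ≤ h (a • x + b • y)) :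
    (∫⁻ x, f x ∂μ) ^ a * (∫⁻ y, g y ∂μ) ^ b ≤ ∫⁻ z, h z ∂μ := by
  obtain ⟨f', hf', hf'f, hf'_eq⟩ := exists_measurable_le_lintegral_eq μ f
  obtain ⟨g', hg', hg'g, hg'_eq⟩ := exists_measurable_le_lintegral_eq μ g
  obtain ⟨h', hh', hhh', hh'_eq⟩ := hh.exists_measurable_ge_lintegral_eq
  rw [hf'_eq, hg'_eq, ← hh'_eq]
  exact hμ ha hb hab hf' hg' hh' fun x y =>
    (mul_le_mul' (ENNReal.rpow_le_rpow (hf'f x) ha.le) (ENNReal.rpow_le_rpow (hg'g y) hb.le)).trans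
      ((hyp x y).trans (hhh' _))

end HasPrekopaLeindler

theorem hasPrekopaLeindler_volume_pi (n : ℕ) :
    HasPrekopaLeindler (volume : Measure (Fin n → ℝ)) := by
  induction n with
  | zero =>
    rw [volume_pi, Measure.pi_of_empty _ 0]
    exact .dirac_zero
  | succ n ih =>
    let e : ℝ × (Fin n → ℝ) →ₗ[ℝ] Fin (n + 1) → ℝ :=
      { toFun := (MeasurableEquiv.piFinSuccAbove (fun _ => ℝ) 0).symm
        map_add' := fun p q => by
          ext i
          refine Fin.cases ?_ (fun j => ?_) i <;> simp [MeasurableEquiv.piFinSuccAbove]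
        map_smul' := fun c p => by
          ext i
          refine Fin.cases ?_ (fun j => ?_) i <;> simp [MeasurableEquiv.piFinSuccAbove] }
    exact (Real.hasPrekopaLeindler_volume.prod ih).of_measurePreserving e
      (volume_preserving_piFinSuccAbove (fun _ => ℝ) 0).symm

theorem ConvexOn.ofReal_exp_neg_rpow_mul_rpow_le {E : Type*} [AddCommMonoid E] [Module ℝ E]
    {s : Set E} {φ : E → ℝ} (hφ : ConvexOn ℝ s φ) {p q : E} (hp : p ∈ s) (hq : q ∈ s)
    {a b : ℝ} (ha : 0 ≤ a) (hb : 0 ≤ b) (hab : a + b = 1) :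
    ENNReal.ofReal (Real.exp (-φ p)) ^ a * ENNReal.ofReal (Real.exp (-φ q)) ^ b ≤
      ENNReal.ofReal (Real.exp (-φ (a • p + b • q))) := by
  rw [ENNReal.ofReal_rpow_of_pos (Real.exp_pos _), ENNReal.ofReal_rpow_of_pos (Real.exp_pos _),
    ← ENNReal.ofReal_mul (by positivity), ← Real.exp_mul, ← Real.exp_mul, ← Real.exp_add]
  refine ENNReal.ofReal_le_ofReal (Real.exp_le_exp.2 ?_)
  have := hφ.2 hp hq ha hb hab
  simp only [smul_eq_mul] at this
  linarith

theorem Real.mul_log_add_mul_log_le_log_of_ofReal {x y z a b : ℝ} (hx : 0 < x) (hy : 0 < y)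
    (hz : 0 < z) (h : ENNReal.ofReal x ^ a * ENNReal.ofReal y ^ b ≤ ENNReal.ofReal z) :
    a * Real.log x + b * Real.log y ≤ Real.log z := by
  rw [ENNReal.ofReal_rpow_of_pos hx, ENNReal.ofReal_rpow_of_pos hy,
    ← ENNReal.ofReal_mul (by positivity), ENNReal.ofReal_le_ofReal_iff hz.le] at h
  rw [← Real.log_rpow hx, ← Real.log_rpow hy, ← Real.log_mul (by positivity) (by positivity)]
  exact Real.log_le_log (by positivity) h

theorem prekopa_theorem_general (n : ℕ) (I : Set ℝ) (hIconv : Convex ℝ I)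
    (φ : ℝ × (Fin n → ℝ) → ℝ)
    (hφ : ConvexOn ℝ (I ×ˢ (Set.univ : Set (Fin n → ℝ))) φ)
    (hInt : ∀ t ∈ I, Integrable (fun x : Fin n → ℝ => Real.exp (-φ (t, x))))
    (hpos : ∀ t ∈ I, 0 < ∫ x : Fin n → ℝ, Real.exp (-φ (t, x))) :
    ConvexOn ℝ I (fun t => -Real.log (∫ x : Fin n → ℝ, Real.exp (-φ (t, x)))) := by
  have hlintegral : ∀ t ∈ I, ∫⁻ x, ENNReal.ofReal (Real.exp (-φ (t, x))) =
      ENNReal.ofReal (∫ x, Real.exp (-φ (t, x))) := fun t ht =>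
    (ofReal_integral_eq_lintegral_ofReal (hInt t ht) (.of_forall fun _ => (Real.exp_pos _).le)).symm
  refine convexOn_iff_forall_pos.2 ⟨hIconv, fun t₀ ht₀ t₁ ht₁ a b ha hb hab => ?_⟩
  have ht : a • t₀ + b • t₁ ∈ I := hIconv ht₀ ht₁ ha.le hb.le hab
  have hPL := (hasPrekopaLeindler_volume_pi n).lintegral_rpow_mul_lintegral_rpow_le ha hb hab
    (hInt _ ht).aemeasurable.ennreal_ofReal fun x y => by
      simpa using hφ.ofReal_exp_neg_rpow_mul_rpow_le (mk_mem_prod ht₀ (mem_univ x))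
        (mk_mem_prod ht₁ (mem_univ y)) ha.le hb.le hab
  rw [hlintegral t₀ ht₀, hlintegral t₁ ht₁, hlintegral _ ht] at hPL
  have := Real.mul_log_add_mul_log_le_log_of_ofReal (hpos t₀ ht₀) (hpos t₁ ht₁) (hpos _ ht) hPL
  simp only [smul_eq_mul] at this ⊢
  linarith

/-- Prékopa's theorem: If `I ⊆ ℝ` is an open interval and
`φ : I × ℝⁿ → ℝ` is jointly convex, with `∫_{ℝⁿ} e^{-φ(t,x)} dx` finite and positive
for each `t ∈ I`, then `t ↦ -log ∫_{ℝⁿ} e^{-φ(t,x)} dx` is convex on `I`. -/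
theorem prekopa_theorem (n : ℕ) (I : Set ℝ) (hIopen : IsOpen I) (hIconv : Convex ℝ I)
    (φ : ℝ × (Fin n → ℝ) → ℝ)
    (hφ : ConvexOn ℝ (I ×ˢ (Set.univ : Set (Fin n → ℝ))) φ)
    (hInt : ∀ t ∈ I, Integrable (fun x : Fin n → ℝ => Real.exp (-φ (t, x))))
    (hpos : ∀ t ∈ I, 0 < ∫ x : Fin n → ℝ, Real.exp (-φ (t, x))) :
    ConvexOn ℝ I (fun t => -Real.log (∫ x : Fin n → ℝ, Real.exp (-φ (t, x)))) :=
  prekopa_theorem_general n I hIconv φ hφ hInt hpos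
end
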